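/- Let (X_k^j)_{k≥1} for j = 1,…,n be bounded i.i.d. sequences of real random variables (bounded by C₀) with E[X_k^j] = H_j, and let Φ(t,r+1) be arbitrary row-stochastic n×n matrices (possibly depending on t, r). Then almost surely (1/t²)·Σ_{r=1}^t [ Σ_{j=1}^n Φ(t,r+1)[i][j]·( Σ_{k=1}^r X_k^j − r·H_j ) ] → 0 as t → ∞, for each i. -/

import Mathlib

open MeasureTheory ProbabilityTheory Filter

private lemma aux_cesaro (g : ℕ → ℝ) (hg : ∀ r, 0 ≤ g r)
    (h : Tendsto (fun r : ℕ => g r / r) atTop (nhds 0)) :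
    Tendsto (fun t : ℕ => (1 / (t : ℝ) ^ 2) * ∑ r ∈ Finset.Icc 1 t, g r)
      atTop (nhds 0) := by
  set u : ℕ → ℝ := fun i => g (i + 1) / (i + 1) with hu
  have hu0 : Tendsto u atTop (nhds 0) := by
    have := h.comp (tendsto_add_atTop_nat 1)
    simpa [u, Function.comp_def] using this
  have hces := hu0.cesaro
  refine squeeze_zero' ?_ ?_ hces
  · filter_upwards with t
    exact mul_nonneg (by positivity) (Finset.sum_nonneg fun r _ => hg r)
  · filter_upwards [Filter.eventually_ge_atTop 1] with t ht
    have htpos : (0 : ℝ) < t := by exact_mod_cast ht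
    have h1 : ∑ r ∈ Finset.Icc 1 t, g r = ∑ i ∈ Finset.range t, g (1 + i) := by
      rw [← Finset.Ico_add_one_right_eq_Icc, Finset.sum_Ico_eq_sum_range]
      simp
    have h2 : ∀ i ∈ Finset.range t, g (1 + i) ≤ (t : ℝ) * u i := by
      intro i hi
      have hi' : (i : ℝ) + 1 ≤ (t : ℝ) := by
        have := Finset.mem_range.mp hi
        exact_mod_cast this
      have hpos : (0 : ℝ) < (i : ℝ) + 1 := by positivity
      have : g (1 + i) = ((i : ℝ) + 1) * u i := by
        simp only [u, add_comm 1 i]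
        field_simp
      rw [this]
      exact mul_le_mul_of_nonneg_right hi'
        (div_nonneg (hg _) (by positivity))
    have h3 : ∑ r ∈ Finset.Icc 1 t, g r ≤ (t : ℝ) * ∑ i ∈ Finset.range t, u i := by
      rw [h1, Finset.mul_sum]
      exact Finset.sum_le_sum h2
    calc (1 / (t : ℝ) ^ 2) * ∑ r ∈ Finset.Icc 1 t, g r
        ≤ (1 / (t : ℝ) ^ 2) * ((t : ℝ) * ∑ i ∈ Finset.range t, u i) := by
          apply mul_le_mul_of_nonneg_left h3 (by positivity)
      _ = (t : ℝ)⁻¹ * ∑ i ∈ Finset.range t, u i := by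
          field_simp

theorem stmt19 {Ω : Type*} [MeasureSpace Ω] [IsProbabilityMeasure (ℙ : Measure Ω)]
    (n : ℕ) (X : Fin n → ℕ → Ω → ℝ) (C₀ : ℝ) (H : Fin n → ℝ)
    (hmeas : ∀ j k, Measurable (X j k))
    (hindep : ∀ j, Pairwise (fun k l => IndepFun (X j k) (X j l)))
    (hident : ∀ j k, IdentDistrib (X j k) (X j 1))
    (hbound : ∀ j k ω, |X j k ω| ≤ C₀)
    (hmean : ∀ j, ∫ ω, X j 1 ω = H j)
    (Φ : ℕ → ℕ → Matrix (Fin n) (Fin n) ℝ)  -- `Φ t r` stands for Φ(t, r+1)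
    (hΦ0 : ∀ t r i j, 0 ≤ Φ t r i j) (hΦ1 : ∀ t r i, ∑ j, Φ t r i j = 1) :
    ∀ i : Fin n, ∀ᵐ ω, Tendsto
      (fun t : ℕ => (1 / (t : ℝ) ^ 2) *
        ∑ r ∈ Finset.Icc 1 t, ∑ j, Φ t r i j *
          ((∑ k ∈ Finset.Icc 1 r, X j k ω) - (r : ℝ) * H j))
      atTop (nhds 0) := by
  intro i
  -- Strong law for each j
  have hslln : ∀ᵐ ω, ∀ j : Fin n,
      Tendsto (fun r : ℕ => (∑ k ∈ Finset.Icc 1 r, X j k ω) / r) atTop (nhds (H j)) := by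
    rw [ae_all_iff]
    intro j
    set Y : ℕ → Ω → ℝ := fun i ω => X j (i + 1) ω with hY
    have hint : Integrable (Y 0) := by
      refine ⟨(hmeas j 1).aestronglyMeasurable, ?_⟩
      apply HasFiniteIntegral.of_bounded (C := C₀)
      filter_upwards with ω
      simpa [Y] using hbound j 1 ω
    have hYindep : Pairwise (Function.onFun (IndepFun · · ℙ) Y) := by
      intro a b hab
      exact hindep j (fun h => hab (by omega))
    have hYident : ∀ i, IdentDistrib (Y i) (Y 0) := fun i =>
      (hident j (i + 1)).trans (hident j 1).symm
    have := strong_law_ae_real Y hint hYindep hYident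
    have hmean' : (ℙ : Measure Ω)[Y 0] = H j := by simpa [Y] using hmean j
    rw [hmean'] at this
    filter_upwards [this] with ω hω
    have heq : ∀ r : ℕ, ∑ k ∈ Finset.Icc 1 r, X j k ω = ∑ i ∈ Finset.range r, Y i ω := by
      intro r
      rw [← Finset.Ico_add_one_right_eq_Icc, Finset.sum_Ico_eq_sum_range]
      simp [Y, add_comm 1]
    simpa [heq] using hω
  filter_upwards [hslln] with ω hω
  -- deterministic part
  set f : Fin n → ℕ → ℝ :=
    fun j r => (∑ k ∈ Finset.Icc 1 r, X j k ω) - (r : ℝ) * H j with hf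
  have hfj : ∀ j, Tendsto (fun r : ℕ => f j r / r) atTop (nhds 0) := by
    intro j
    have h1 := (hω j).sub_const (H j)
    rw [sub_self] at h1
    apply h1.congr'
    filter_upwards [Filter.eventually_ge_atTop 1] with r hr
    have hr' : (r : ℝ) ≠ 0 := by positivity
    field_simp [f]
    rfl
  set g : ℕ → ℝ := fun r => ∑ j, |f j r| with hg
  have hgnn : ∀ r, 0 ≤ g r := fun r => Finset.sum_nonneg fun j _ => abs_nonneg _
  have hgt : Tendsto (fun r : ℕ => g r / r) atTop (nhds 0) := by
    have : Tendsto (fun r : ℕ => ∑ j, |f j r / r|) atTop (nhds (∑ j : Fin n, (0:ℝ))) := by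
      refine tendsto_finset_sum _ fun j _ => ?_
      simpa using (hfj j).abs
    simp only [Finset.sum_const_zero] at this
    apply this.congr'
    filter_upwards [Filter.eventually_ge_atTop 1] with r hr
    have hr' : (0:ℝ) < r := by exact_mod_cast hr
    rw [Finset.sum_div]
    refine Finset.sum_congr rfl fun j _ => ?_
    rw [abs_div, abs_of_pos hr']
  have haux := aux_cesaro g hgnn hgt
  -- squeeze
  apply squeeze_zero_norm' _ haux
  filter_upwards with t
  rw [Real.norm_eq_abs, abs_mul, abs_of_nonneg (by positivity :
    (0:ℝ) ≤ 1 / (t : ℝ) ^ 2)]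
  apply mul_le_mul_of_nonneg_left _ (by positivity)
  calc |∑ r ∈ Finset.Icc 1 t, ∑ j, Φ t r i j * f j r|
      ≤ ∑ r ∈ Finset.Icc 1 t, |∑ j, Φ t r i j * f j r| := Finset.abs_sum_le_sum_abs _ _
    _ ≤ ∑ r ∈ Finset.Icc 1 t, g r := by
        refine Finset.sum_le_sum fun r _ => ?_
        calc |∑ j, Φ t r i j * f j r| ≤ ∑ j, |Φ t r i j * f j r| :=
              Finset.abs_sum_le_sum_abs _ _
          _ ≤ ∑ j, |f j r| := by
              refine Finset.sum_le_sum fun j _ => ?_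
              rw [abs_mul, abs_of_nonneg (hΦ0 t r i j)]
              have hle1 : Φ t r i j ≤ 1 := by
                have := hΦ1 t r i
                calc Φ t r i j ≤ ∑ j', Φ t r i j' :=
                      Finset.single_le_sum (fun j' _ => hΦ0 t r i j') (Finset.mem_univ j)
                  _ = 1 := this
              nlinarith [abs_nonneg (f j r)]
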